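/- arXiv:1811.11784 — 2 statements merged into one kernel-verified Lean document; each statement's English description precedes it below -/
import Mathlib

section
/- Let P be an N×N orthogonal projection (P* = P, P² = P) and suppose the Lindblad generator 𝓛(X) = (1/2)∑ₖ([Lₖ*, X]Lₖ + Lₖ*[X, Lₖ]) − i[X, H] satisfies 𝓛(P) = 0. Then the dissipator 𝓓(P, P) = 𝓛(P²) − 𝓛(P)P − P𝓛(P) equals 𝓛(P) − (𝓛P)P − P(𝓛P) = 0, and consequently P commutes with each Lₖ and with H. -/
open Matrix

/-- If an orthogonal projection `P` is annihilated by a Lindblad generator, then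
the dissipator at `(P,P)` vanishes and `P` commutes with every `Lₖ` and with `H`. -/
theorem stmt_5 (N d : ℕ) (L : Fin d → Matrix (Fin N) (Fin N) ℂ)
    (H P : Matrix (Fin N) (Fin N) ℂ) (hH : Hᴴ = H)
    (hP1 : Pᴴ = P) (hP2 : P * P = P)
    (𝓛 : Matrix (Fin N) (Fin N) ℂ → Matrix (Fin N) (Fin N) ℂ)
    (h𝓛 : ∀ Y, 𝓛 Y = (1 / 2 : ℂ) • ∑ k, (((L k)ᴴ * Y - Y * (L k)ᴴ) * L k
          + (L k)ᴴ * (Y * L k - L k * Y))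
        - Complex.I • (Y * H - H * Y))
    (hinv : 𝓛 P = 0) :
    𝓛 (P * P) - 𝓛 P * P - P * 𝓛 P = 0
      ∧ (∀ k, P * L k = L k * P) ∧ P * H = H * P := by
  have hPP : ∀ X : Matrix (Fin N) (Fin N) ℂ, P * (P * X) = P * X := fun X => by
    rw [← mul_assoc, hP2]
  set S : Fin d → Matrix (Fin N) (Fin N) ℂ :=
    fun k => ((L k)ᴴ * P - P * (L k)ᴴ) * L k + (L k)ᴴ * (P * L k - L k * P) with hS
  have hLP : 𝓛 P = (1/2:ℂ) • ∑ k, S k - Complex.I • (P * H - H * P) := h𝓛 P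
  have hsum0 : (1/2:ℂ) • ∑ k, S k = Complex.I • (P * H - H * P) := by
    have h := hinv
    rw [hLP] at h
    exact sub_eq_zero.mp h
  have hterm : ∀ k, (P * L k - L k * P)ᴴ * (P * L k - L k * P)
      = (1/2:ℂ) • (S k - S k * P - P * S k) := by
    intro k
    simp only [hS, conjTranspose_sub, conjTranspose_mul, hP1]
    simp only [mul_sub, sub_mul, mul_add, add_mul, smul_sub, smul_add, mul_assoc]
    simp only [hPP, hP2]
    module
  have hAA : ∑ k, (P * L k - L k * P)ᴴ * (P * L k - L k * P) = 0 := by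
    have e1 : ∑ k, (P * L k - L k * P)ᴴ * (P * L k - L k * P)
        = (1/2:ℂ) • ((∑ k, S k) - (∑ k, S k) * P - P * ∑ k, S k) := by
      rw [Finset.sum_congr rfl (fun k _ => hterm k), ← Finset.smul_sum]
      congr 1
      rw [Finset.sum_sub_distrib, Finset.sum_sub_distrib, Finset.sum_mul, Finset.mul_sum]
    rw [e1]
    have e2 : (1/2:ℂ) • ((∑ k, S k) - (∑ k, S k) * P - P * ∑ k, S k)
        = (1/2:ℂ) • (∑ k, S k) - ((1/2:ℂ) • ∑ k, S k) * P - P * ((1/2:ℂ) • ∑ k, S k) := by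
      simp [smul_sub, Matrix.smul_mul, Matrix.mul_smul]
    rw [e2, hsum0]
    have h3 : P * H - H * P - (P * H - H * P) * P - P * (P * H - H * P) = 0 := by
      simp only [mul_sub, sub_mul, mul_assoc, hPP, hP2]
      abel
    calc Complex.I • (P * H - H * P) - Complex.I • (P * H - H * P) * P
          - P * Complex.I • (P * H - H * P)
        = Complex.I • (P * H - H * P - (P * H - H * P) * P - P * (P * H - H * P)) := by
          rw [Matrix.smul_mul, Matrix.mul_smul]
          module
      _ = 0 := by rw [h3, smul_zero]
  have hA0 : ∀ k, P * L k - L k * P = 0 := by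
    have key : ∀ i : Fin N, ∑ c, ∑ j, Complex.normSq ((P * L c - L c * P) j i) = 0 := by
      intro i
      have h1 : (∑ c, (P * L c - L c * P)ᴴ * (P * L c - L c * P)) i i = 0 := by
        rw [hAA]; rfl
      rw [Matrix.sum_apply] at h1
      have h2 : ∀ c : Fin d, ((P * L c - L c * P)ᴴ * (P * L c - L c * P)) i i
          = ((∑ j, Complex.normSq ((P * L c - L c * P) j i) : ℝ) : ℂ) := by
        intro c
        rw [Matrix.mul_apply]
        push_cast
        refine Finset.sum_congr rfl fun j _ => ?_
        rw [Matrix.conjTranspose_apply, Complex.star_def, mul_comm, Complex.mul_conj]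
      simp only [h2] at h1
      push_cast at h1
      exact_mod_cast h1
    intro k
    ext j i
    have hk := (Finset.sum_eq_zero_iff_of_nonneg
      (fun c _ => Finset.sum_nonneg fun j _ => Complex.normSq_nonneg _)).mp (key i) k
      (Finset.mem_univ k)
    have hj := (Finset.sum_eq_zero_iff_of_nonneg
      (fun j _ => Complex.normSq_nonneg _)).mp hk j (Finset.mem_univ j)
    simpa using Complex.normSq_eq_zero.mp hj
  have hcomm : ∀ k, P * L k = L k * P := fun k => sub_eq_zero.mp (hA0 k)
  have hcommH : P * H = H * P := by
    have hS0 : ∀ k, S k = 0 := by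
      intro k
      have h1 : P * (L k)ᴴ = (L k)ᴴ * P := by
        have := congrArg conjTranspose (hcomm k)
        simpa [conjTranspose_mul, hP1] using this.symm
      simp [hS, h1, hcomm k]
    have : (0 : Matrix (Fin N) (Fin N) ℂ) = Complex.I • (P * H - H * P) := by
      rw [← hsum0]
      simp [hS0]
    have h2 : P * H - H * P = 0 := by
      rcases smul_eq_zero.mp this.symm with h | h
      · exact absurd h Complex.I_ne_zero
      · exact h
    exact sub_eq_zero.mp h2
  exact ⟨by rw [hP2, hinv]; simp, hcomm, hcommH⟩
end

section
/- Let {Pₙ} be a complete family of mutually orthogonal projections on ℂ^N, and suppose H = ∑ₙ εₙ Pₙ with εₙ real, and Lₖ = ∑ₙ λ_{k,n} Pₙ with λ_{k,n} complex, for k = 1,…,d. Then for any N×N matrix X and any indices n, m, the Lindblad generator 𝓛(X) = (1/2)∑ₖ([Lₖ*, X]Lₖ + Lₖ*[X, Lₖ]) − i[X, H] satisfies 𝓛(Pₙ X Pₘ) = z_{nm} Pₙ X Pₘ, where z_{nm} = ∑ₖ(λ̄_{k,n} λ_{k,m} − |λ_{k,n}|²/2 − |λ_{k,m}|²/2) +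 i(εₙ − εₘ). -/
/-!
Since the `Pₙ` are orthogonal idempotents, any `∑ᵢ cᵢ Pᵢ` multiplies `Pₙ X Pₘ` by `cₙ` from the
left and by `cₘ` from the right. This applies to `H`, `Lₖ` and `Lₖ* = ∑ᵢ λ̄_{k,i} Pᵢ`, so every term
of `𝓛(Pₙ X Pₘ)` is a scalar multiple of `Pₙ X Pₘ`, and collecting the scalars (with
`λ̄ λ = |λ|²`) gives `z_{nm}`.
-/

open Matrix

section OrthogonalFamily

variable {ι R A : Type*} [Fintype ι] [DecidableEq ι] [CommSemiring R] [Semiring A] [Module R A]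

theorem sum_smul_mul_of_orthogonal [IsScalarTower R A A] {P : ι → A}
    (hP : ∀ i j, P i * P j = if i = j then P i else 0) (c : ι → R) (j : ι) :
    (∑ i, c i • P i) * P j = c j • P j := by
  simp [Finset.sum_mul, smul_mul_assoc, hP, smul_ite]

theorem mul_sum_smul_of_orthogonal [SMulCommClass R A A] {P : ι → A}
    (hP : ∀ i j, P i * P j = if i = j then P i else 0) (c : ι → R) (j : ι) :
    P j * (∑ i, c i • P i) = c j • P j := by
  simp [Finset.mul_sum, mul_smul_comm, hP, smul_ite]

theorem sum_smul_mul_sandwich [IsScalarTower R A A] {P : ι → A}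
    (hP : ∀ i j, P i * P j = if i = j then P i else 0) (c : ι → R) (X : A) (n m : ι) :
    (∑ i, c i • P i) * (P n * X * P m) = c n • (P n * X * P m) := by
  rw [mul_assoc (P n), ← mul_assoc, sum_smul_mul_of_orthogonal hP, smul_mul_assoc]

theorem sandwich_mul_sum_smul [SMulCommClass R A A] {P : ι → A}
    (hP : ∀ i j, P i * P j = if i = j then P i else 0) (c : ι → R) (X : A) (n m : ι) :
    (P n * X * P m) * (∑ i, c i • P i) = c m • (P n * X * P m) := by
  rw [mul_assoc, mul_sum_smul_of_orthogonal hP, mul_smul_comm]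

end OrthogonalFamily

theorem dissipator_eq_smul_of_eigen {R A : Type*} [CommRing R] [Ring A] [Module R A]
    [IsScalarTower R A A] [SMulCommClass R A A] {L L' Q : A} {a b a' b' : R}
    (hLQ : L * Q = a • Q) (hQL : Q * L = b • Q) (hL'Q : L' * Q = a' • Q)
    (hQL' : Q * L' = b' • Q) :
    (L' * Q - Q * L') * L + L' * (Q * L - L * Q) = ((a' - b') * b + (b - a) * a') • Q := by
  rw [hL'Q, hQL', hQL, hLQ, ← sub_smul, ← sub_smul, smul_mul_assoc, mul_smul_comm, hQL, hL'Q,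
    smul_smul, smul_smul, ← add_smul]

theorem stmt_6_general (N d M : ℕ) (P : Fin M → Matrix (Fin N) (Fin N) ℂ)
    (hPherm : ∀ n, (P n)ᴴ = P n)
    (hPorth : ∀ n m, P n * P m = if n = m then P n else 0)
    (ε : Fin M → ℝ) (lam : Fin d → Fin M → ℂ)
    (H : Matrix (Fin N) (Fin N) ℂ) (hHdef : H = ∑ n, (ε n : ℂ) • P n)
    (L : Fin d → Matrix (Fin N) (Fin N) ℂ)
    (hLdef : ∀ k, L k = ∑ n, lam k n • P n)
    (𝓛 : Matrix (Fin N) (Fin N) ℂ → Matrix (Fin N) (Fin N) ℂ)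
    (h𝓛 : ∀ Y, 𝓛 Y = (1 / 2 : ℂ) • ∑ k, (((L k)ᴴ * Y - Y * (L k)ᴴ) * L k
          + (L k)ᴴ * (Y * L k - L k * Y))
        - Complex.I • (Y * H - H * Y)) :
    ∀ (X : Matrix (Fin N) (Fin N) ℂ) (n m : Fin M),
      𝓛 (P n * X * P m)
        = ((∑ k, ((starRingEnd ℂ) (lam k n) * lam k m
              - ((‖lam k n‖ : ℝ) : ℂ) ^ 2 / 2
              - ((‖lam k m‖ : ℝ) : ℂ) ^ 2 / 2))
            + Complex.I * ((ε n : ℂ) - (ε m : ℂ))) • (P n * X * P m) := by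
  intro X n m
  have hLH : ∀ k, (L k)ᴴ = ∑ i, (starRingEnd ℂ) (lam k i) • P i := fun k => by
    simp [hLdef k, conjTranspose_sum, conjTranspose_smul, hPherm]
  have hdiss : ∀ k, ((L k)ᴴ * (P n * X * P m) - (P n * X * P m) * (L k)ᴴ) * L k
      + (L k)ᴴ * ((P n * X * P m) * L k - L k * (P n * X * P m))
      = (((starRingEnd ℂ) (lam k n) - (starRingEnd ℂ) (lam k m)) * lam k m
          + (lam k m - lam k n) * (starRingEnd ℂ) (lam k n)) • (P n * X * P m) := fun k => by
    rw [hLH k, hLdef k]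
    exact dissipator_eq_smul_of_eigen (sum_smul_mul_sandwich hPorth _ _ _ _)
      (sandwich_mul_sum_smul hPorth _ _ _ _) (sum_smul_mul_sandwich hPorth _ _ _ _)
      (sandwich_mul_sum_smul hPorth _ _ _ _)
  rw [h𝓛, hHdef, sum_smul_mul_sandwich hPorth, sandwich_mul_sum_smul hPorth]
  simp only [hdiss, ← Finset.sum_smul, smul_smul, ← sub_smul]
  congr 1
  rw [Finset.mul_sum, sub_eq_add_neg]
  congr 1
  · refine Finset.sum_congr rfl fun k _ => ?_
    rw [← Complex.conj_mul', ← Complex.conj_mul']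
    ring
  · ring

/-- For a Lindblad generator whose Hamiltonian and coupling operators are
simultaneously diagonal with respect to a complete family of mutually orthogonal
projections, the operators `Pₙ X Pₘ` are eigen-operators with eigenvalue `z_{nm}`. -/
theorem stmt_6 (N d M : ℕ) (P : Fin M → Matrix (Fin N) (Fin N) ℂ)
    (hPherm : ∀ n, (P n)ᴴ = P n)
    (hPorth : ∀ n m, P n * P m = if n = m then P n else 0)
    (hPcompl : ∑ n, P n = 1)
    (ε : Fin M → ℝ) (lam : Fin d → Fin M → ℂ)
    (H : Matrix (Fin N) (Fin N) ℂ) (hHdef : H = ∑ n, (ε n : ℂ) • P n)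
    (L : Fin d → Matrix (Fin N) (Fin N) ℂ)
    (hLdef : ∀ k, L k = ∑ n, lam k n • P n)
    (𝓛 : Matrix (Fin N) (Fin N) ℂ → Matrix (Fin N) (Fin N) ℂ)
    (h𝓛 : ∀ Y, 𝓛 Y = (1 / 2 : ℂ) • ∑ k, (((L k)ᴴ * Y - Y * (L k)ᴴ) * L k
          + (L k)ᴴ * (Y * L k - L k * Y))
        - Complex.I • (Y * H - H * Y)) :
    ∀ (X : Matrix (Fin N) (Fin N) ℂ) (n m : Fin M),
      𝓛 (P n * X * P m)
        = ((∑ k, ((starRingEnd ℂ) (lam k n) * lam k m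
              - ((‖lam k n‖ : ℝ) : ℂ) ^ 2 / 2
              - ((‖lam k m‖ : ℝ) : ℂ) ^ 2 / 2))
            + Complex.I * ((ε n : ℂ) - (ε m : ℂ))) • (P n * X * P m) :=
  stmt_6_general N d M P hPherm hPorth ε lam H hHdef L hLdef 𝓛 h𝓛
end
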